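/- arXiv:1711.01250 — 2 statements merged into one kernel-verified Lean document; each statement's English description precedes it below -/
import Mathlib

section
/- Let m ≥ 17 be a natural number and let v be a nonzero integer that is divisible by every prime number q satisfying m < q ≤ m^4. Then |v| ≥ 2^(m^2). -/
lemma aux_pow4_le_two_pow (m : ℕ) (hm : 17 ≤ m) : m ^ 4 ≤ 2 ^ m := by
  induction m, hm using Nat.le_induction with
  | base => norm_num
  | succ n hn ih =>
    have h1 : (n + 1) ^ 4 * 17 ^ 4 ≤ n ^ 4 * 18 ^ 4 := by
      have : (n + 1) * 17 ≤ n * 18 := by omega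
      calc (n + 1) ^ 4 * 17 ^ 4 = ((n+1) * 17) ^ 4 := by ring
        _ ≤ (n * 18) ^ 4 := Nat.pow_le_pow_left this 4
        _ = n ^ 4 * 18 ^ 4 := by ring
    have h2 : (n + 1) ^ 4 ≤ 2 * n ^ 4 := by
      have h3 : (n + 1) ^ 4 * 17 ^ 4 ≤ (2 * n ^ 4) * 17 ^ 4 := by
        calc (n + 1) ^ 4 * 17 ^ 4 ≤ n ^ 4 * 18 ^ 4 := h1
          _ = n ^ 4 * 104976 := by norm_num
          _ ≤ n ^ 4 * 167042 := Nat.mul_le_mul le_rfl (by norm_num)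
          _ = (2 * n ^ 4) * 17 ^ 4 := by ring
      exact Nat.le_of_mul_le_mul_right h3 (by norm_num)
    calc (n + 1) ^ 4 ≤ 2 * n ^ 4 := h2
      _ ≤ 2 * 2 ^ n := by omega
      _ = 2 ^ (n + 1) := by ring

lemma aux_card_primes (m : ℕ) (hm : 17 ≤ m) :
    m ^ 3 ≤ ((Finset.range (m ^ 4 + 1)).filter Nat.Prime).card + 2 := by
  set n := m ^ 4 / 2 with hn
  have hm4 : 17 ^ 4 ≤ m ^ 4 := Nat.pow_le_pow_left hm 4
  have hn4 : 4 ≤ n := by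
    have : (17:ℕ) ^ 4 = 83521 := by norm_num
    omega
  have h2n : 2 * n ≤ m ^ 4 ∧ m ^ 4 ≤ 2 * n + 1 := by omega
  set T := (Finset.range (m ^ 4 + 1)).filter Nat.Prime with hT
  set T' := (Finset.range (2 * n + 1)).filter Nat.Prime with hT'
  have hsub : T' ⊆ T := by
    apply Finset.filter_subset_filter
    exact Finset.range_subset_range.2 (by omega)
  -- centralBinom n ≤ (2n) ^ card T'
  have hA : Nat.centralBinom n ≤ (2 * n) ^ T'.card := by
    have hprod : (∏ p ∈ T', p ^ (Nat.centralBinom n).factorization p) = Nat.centralBinom n := by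
      rw [hT']
      rw [Finset.prod_filter_of_ne, Nat.prod_pow_factorization_centralBinom]
      intro p _ h
      by_contra hp
      rw [Nat.factorization_eq_zero_of_not_prime _ hp, pow_zero] at h
      exact h rfl
    calc Nat.centralBinom n = ∏ p ∈ T', p ^ (Nat.centralBinom n).factorization p := hprod.symm
      _ ≤ ∏ _p ∈ T', 2 * n := by
          apply Finset.prod_le_prod'
          intro p _
          exact Nat.pow_factorization_choose_le (by omega)
      _ = (2 * n) ^ T'.card := Finset.prod_const _
  have hB : 4 ^ n < n * Nat.centralBinom n := Nat.four_pow_lt_mul_centralBinom n hn4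
  have hchain : 2 ^ (2 * n) ≤ 2 ^ (m * (T.card + 1)) := by
    calc 2 ^ (2 * n) = 4 ^ n := by rw [pow_mul]; norm_num
      _ ≤ n * (2 * n) ^ T'.card := le_trans hB.le (Nat.mul_le_mul le_rfl hA)
      _ ≤ m ^ 4 * (m ^ 4) ^ T.card := by
          apply Nat.mul_le_mul (by omega)
          calc (2 * n) ^ T'.card ≤ (m ^ 4) ^ T'.card := Nat.pow_le_pow_left (by omega) _
            _ ≤ (m ^ 4) ^ T.card := Nat.pow_le_pow_right (by positivity)
                (Finset.card_le_card hsub)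
      _ = (m ^ 4) ^ (T.card + 1) := by ring
      _ ≤ (2 ^ m) ^ (T.card + 1) := Nat.pow_le_pow_left (aux_pow4_le_two_pow m hm) _
      _ = 2 ^ (m * (T.card + 1)) := by rw [← pow_mul, mul_comm]
  have hle : 2 * n ≤ m * (T.card + 1) := (Nat.pow_le_pow_iff_right (by norm_num)).mp hchain
  have : m * m ^ 3 ≤ m * (T.card + 2) := by
    calc m * m ^ 3 = m ^ 4 := by ring
      _ ≤ 2 * n + 1 := h2n.2
      _ ≤ m * (T.card + 1) + m := by omega
      _ = m * (T.card + 2) := by ring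
  exact Nat.le_of_mul_le_mul_left this (by omega)

/-- Magnitude bound from divisibility by interval primes.
Let `m ≥ 17` and let `v` be a nonzero integer divisible by every prime `q`
with `m < q ≤ m^4`. Then `|v| ≥ 2^(m^2)`. -/
theorem stmt_3 (m : ℕ) (hm : 17 ≤ m) (v : ℤ) (hv : v ≠ 0)
    (hdvd : ∀ q : ℕ, Nat.Prime q → m < q → q ≤ m ^ 4 → (q : ℤ) ∣ v) :
    (2 : ℤ) ^ (m ^ 2) ≤ |v| := by
  set S := (Finset.Ioc m (m ^ 4)).filter Nat.Prime with hS
  set T := (Finset.range (m ^ 4 + 1)).filter Nat.Prime with hT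
  set U := (Finset.range (m + 1)).filter Nat.Prime with hU
  -- card bound
  have hUT : U ⊆ T := Finset.filter_subset_filter _
    (Finset.range_subset_range.2 (by have h := Nat.le_self_pow (by norm_num : (4:ℕ) ≠ 0) m; omega))
  have hSTU : S = T \ U := by
    ext q
    simp only [hS, hT, hU, Finset.mem_filter, Finset.mem_Ioc, Finset.mem_sdiff,
      Finset.mem_range]
    constructor
    · rintro ⟨⟨h1, h2⟩, h3⟩
      exact ⟨⟨by omega, h3⟩, fun h => by omega⟩
    · rintro ⟨⟨h1, h3⟩, h2⟩
      refine ⟨⟨?_, by omega⟩, h3⟩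
      by_contra h
      exact h2 ⟨by omega, h3⟩
  have hUcard : U.card ≤ m + 1 := le_trans (Finset.card_le_card (Finset.filter_subset _ _))
    (by simp)
  have hScard : m ^ 3 ≤ S.card + m + 3 := by
    have h1 := aux_card_primes m hm
    rw [← hT] at h1
    have h2 : S.card = T.card - U.card := by rw [hSTU, Finset.card_sdiff_of_subset hUT]
    have h3 : U.card ≤ T.card := Finset.card_le_card hUT
    omega
  have hexp : m ^ 2 ≤ 4 * S.card := by nlinarith
  -- product of primes in S divides |v|
  have hprim : ∀ q ∈ S, Nat.Prime q := fun q hq => (Finset.mem_filter.1 hq).2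
  have hdvdN : (∏ q ∈ S, q) ∣ v.natAbs := by
    apply Finset.prod_primes_dvd
    · exact fun q hq => (hprim q hq).prime
    · intro q hq
      have hm' := Finset.mem_filter.1 hq
      have h := hdvd q hm'.2 (Finset.mem_Ioc.1 hm'.1).1 (Finset.mem_Ioc.1 hm'.1).2
      have := Int.natAbs_dvd_natAbs.mpr h
      simpa using this
  have hvpos : 0 < v.natAbs := Int.natAbs_pos.mpr hv
  have hPle : (∏ q ∈ S, q) ≤ v.natAbs := Nat.le_of_dvd hvpos hdvdN
  have h16 : 16 ^ S.card ≤ ∏ q ∈ S, q := by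
    rw [← Finset.prod_const]
    apply Finset.prod_le_prod'
    intro q hq
    have := (Finset.mem_Ioc.1 (Finset.mem_filter.1 hq).1).1
    omega
  have hfinal : 2 ^ (m ^ 2) ≤ v.natAbs := by
    calc 2 ^ (m ^ 2) ≤ 2 ^ (4 * S.card) := Nat.pow_le_pow_right (by norm_num) hexp
      _ = 16 ^ S.card := by rw [pow_mul]; norm_num
      _ ≤ ∏ q ∈ S, q := h16
      _ ≤ v.natAbs := hPle
  calc (2 : ℤ) ^ (m ^ 2) = ((2 ^ (m ^ 2) : ℕ) : ℤ) := by push_cast; ring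
    _ ≤ (v.natAbs : ℤ) := Int.ofNat_le.mpr hfinal
    _ = |v| := (Int.abs_eq_natAbs v).symm
end

section
/- Let r be a natural number and let f : {1, …, r} → ℤ satisfy f(i) ≠ 0 for every i ∈ {1, …, r}. For a ∈ ℤ define ĝ(a) = (∏_{i=1}^{r} (f(i) − a)) − ∏_{i=1}^{r} f(i), and set F = −∏_{i=1}^{r} f(i). Then: (1) F ≠ 0; (2) ĝ(0) = 0; and (3) for every a ∈ ℤ, if a = f(i) for some i ∈ {1, …, r}, then ĝ(a) = F. -/
/-- Arithmetic core of `Poly-LWPP = LWPP`.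
Let `r` be a natural number and `f : {1,…,r} → ℤ` with `f i ≠ 0` for all
`i ∈ {1,…,r}`. Define `ĝ a = (∏_{i=1}^r (f i − a)) − ∏_{i=1}^r f i` and
`F = −∏_{i=1}^r f i`. Then `F ≠ 0`, `ĝ 0 = 0`, and whenever `a = f i` for
some `i ∈ {1,…,r}`, we have `ĝ a = F`. -/
theorem stmt_5 (r : ℕ) (f : ℕ → ℤ) (hf : ∀ i ∈ Finset.Icc 1 r, f i ≠ 0)
    (ghat : ℤ → ℤ)
    (hghat : ∀ a : ℤ,
      ghat a = (∏ i ∈ Finset.Icc 1 r, (f i - a)) - ∏ i ∈ Finset.Icc 1 r, f i)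
    (F : ℤ) (hF : F = -∏ i ∈ Finset.Icc 1 r, f i) :
    F ≠ 0 ∧ ghat 0 = 0 ∧
      ∀ a : ℤ, (∃ i ∈ Finset.Icc 1 r, a = f i) → ghat a = F := by
  refine ⟨?_, ?_, ?_⟩
  · rw [hF]
    simpa using Finset.prod_ne_zero_iff.mpr hf
  · simp [hghat]
  · rintro a ⟨i, hi, rfl⟩
    rw [hghat, hF]
    have : ∏ j ∈ Finset.Icc 1 r, (f j - f i) = 0 :=
      Finset.prod_eq_zero hi (by ring)
    rw [this]; ring
end
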